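/- Let M be the matching produced by the round-robin algorithm. Then for every class p and every item j ∈ M(N_p), removing j strictly decreases the value of class p's bundle: v_p(M(N_p)) > v_p(M(N_p) \ {j}). -/
import Mathlib


open MeasureTheory ProbabilityTheory Filter
open scoped ENNReal

namespace ClassEF

variable {A B : Type*}

/-- A set of edges of a bipartite graph is a matching if every vertex
appears in at most one edge. -/
def IsMatching (M : Finset (A × B)) : Prop :=
  (∀ e ∈ M, ∀ e' ∈ M, e.1 = e'.1 → e = e') ∧
  (∀ e ∈ M, ∀ e' ∈ M, e.2 = e'.2 → e = e')

/-- Total weight of a set of edges. -/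
def weightSum (w : A → B → ℝ) (M : Finset (A × B)) : ℝ :=
  ∑ e ∈ M, w e.1 e.2

/-- A left vertex is covered by a matching. -/
def coveredA (M : Finset (A × B)) (a : A) : Prop := ∃ b, (a, b) ∈ M

/-- A right vertex is covered by a matching. -/
def coveredB (M : Finset (A × B)) (b : B) : Prop := ∃ a, (a, b) ∈ M

/-- `M` is a maximum-weight matching among the matchings with `r` edges in the
(complete bipartite) subgraph induced by `A'` and `B'`. -/
def IsMaxMatchingOfSize [DecidableEq A] [DecidableEq B]
    (w : A → B → ℝ) (A' : Finset A) (B' : Finset B) (r : ℕ)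
    (M : Finset (A × B)) : Prop :=
  IsMatching M ∧ M ⊆ A' ×ˢ B' ∧ M.card = r ∧
  ∀ M' : Finset (A × B), IsMatching M' → M' ⊆ A' ×ˢ B' → M'.card = r →
    weightSum w M' ≤ weightSum w M

/-- `M` is a maximum-weight matching (among matchings of arbitrary size). -/
def IsMaxWeightMatching (w : A → B → ℝ) (M : Finset (A × B)) : Prop :=
  IsMatching M ∧ ∀ M' : Finset (A × B), IsMatching M' → weightSum w M' ≤ weightSum w M

open scoped Classical in
/-- The assignment valuation: the maximum total weight of a matching between
the agents of `Np` and the items of `S`. -/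
noncomputable def vval [DecidableEq A] [DecidableEq B]
    (w : A → B → ℝ) (Np : Finset A) (S : Finset B) : ℝ :=
  ((Np ×ˢ S).powerset.filter fun M => IsMatching M).sup'
    ⟨∅, by simp [IsMatching]⟩ (weightSum w)

/-- The set of items matched to an agent of `S` under the matching `M`. -/
def bundleOf [DecidableEq A] [DecidableEq B] (M : Finset (A × B)) (S : Finset A) : Finset B :=
  (M.filter fun e => e.1 ∈ S).image Prod.snd

/-- The total utility received by the agents of `S` under the matching `M`. -/
def classUtil [DecidableEq A] (w : A → B → ℝ) (M : Finset (A × B)) (S : Finset A) : ℝ :=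
  ∑ e ∈ M.filter (fun e => e.1 ∈ S), w e.1 e.2

/-- Class envy-freeness. -/
def ClassEnvyFree [DecidableEq A] [DecidableEq B] {k : ℕ}
    (w : A → B → ℝ) (cls : Fin k → Finset A) (M : Finset (A × B)) : Prop :=
  ∀ p q : Fin k, p ≠ q → vval w (cls p) (bundleOf M (cls q)) ≤ classUtil w M (cls p)

/-- Item `j` is wasted for the matching `M`. -/
def Wasted [DecidableEq A] [DecidableEq B] {k : ℕ}
    (w : A → B → ℝ) (cls : Fin k → Finset A) (M : Finset (A × B)) (j : B) : Prop :=
  ((∀ i : A, (i, j) ∉ M) ∧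
    ∃ p, vval w (cls p) (bundleOf M (cls p)) < vval w (cls p) (insert j (bundleOf M (cls p)))) ∨
  (∃ q, j ∈ bundleOf M (cls q) ∧
    vval w (cls q) (bundleOf M (cls q)) = vval w (cls q) ((bundleOf M (cls q)).erase j) ∧
    ∃ p, p ≠ q ∧
      vval w (cls p) (bundleOf M (cls p)) < vval w (cls p) (insert j (bundleOf M (cls p))))

/-- A matching is non-wasteful if no item is wasted. -/
def NonWasteful [DecidableEq A] [DecidableEq B] {k : ℕ}
    (w : A → B → ℝ) (cls : Fin k → Finset A) (M : Finset (A × B)) : Prop :=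
  ∀ j : B, ¬ Wasted w cls M j

/-- `cls` partitions the agents into `k` disjoint nonempty classes. -/
def IsClassPartition {n k : ℕ} (cls : Fin k → Finset (Fin n)) : Prop :=
  (∀ p, (cls p).Nonempty) ∧ (∀ p q : Fin k, p ≠ q → Disjoint (cls p) (cls q)) ∧
  Finset.univ.biUnion cls = (Finset.univ : Finset (Fin n))

/-- The maximum class size. -/
def maxClassSize {n k : ℕ} (cls : Fin k → Finset (Fin n)) : ℕ :=
  Finset.univ.sup fun p => (cls p).card

/-- The minimum class size. -/
noncomputable def minClassSize {n k : ℕ} (cls : Fin k → Finset (Fin n)) : ℕ :=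
  sInf (Set.range fun p => (cls p).card)

/-- Marginal value of the item `j` for the bundle `S` of a class with agent set `Np`. -/
noncomputable def marginalVal [DecidableEq A] [DecidableEq B]
    (w : A → B → ℝ) (Np : Finset A) (S : Finset B) (j : B) : ℝ :=
  vval w Np (insert j S) - vval w Np S

/-- The items remaining once each class `p` holds the bundle `Bu p`. -/
def remainingItems [Fintype B] [DecidableEq B] {k : ℕ} (Bu : Fin k → Finset B) : Finset B :=
  Finset.univ \ Finset.univ.biUnion Bu

/-- One selection step of class `p` in the round-robin algorithm, acting on the
tuple of current bundles: if some remaining item has positive marginal value,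
class `p` adds to its bundle a remaining item of maximum marginal value;
otherwise nothing happens. -/
def ClassStep [Fintype B] [DecidableEq A] [DecidableEq B] {k : ℕ}
    (w : A → B → ℝ) (cls : Fin k → Finset A) (p : Fin k)
    (Bu Bu' : Fin k → Finset B) : Prop :=
  (∃ j ∈ remainingItems Bu,
      0 < marginalVal w (cls p) (Bu p) j ∧
      (∀ j' ∈ remainingItems Bu,
        marginalVal w (cls p) (Bu p) j' ≤ marginalVal w (cls p) (Bu p) j) ∧
      Bu' = Function.update Bu p (insert j (Bu p))) ∨
  ((∀ j ∈ remainingItems Bu, marginalVal w (cls p) (Bu p) j ≤ 0) ∧ Bu' = Bu)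

/-- One round of the round-robin algorithm: the classes `p = 0, …, k-1` perform
their selection steps in increasing order. -/
def RoundStep [Fintype B] [DecidableEq A] [DecidableEq B] {k : ℕ}
    (w : A → B → ℝ) (cls : Fin k → Finset A) (Bu Bu' : Fin k → Finset B) : Prop :=
  ∃ f : Fin (k + 1) → Fin k → Finset B,
    f 0 = Bu ∧ f (Fin.last k) = Bu' ∧
    ∀ p : Fin k, ClassStep w cls p (f p.castSucc) (f p.succ)

/-- `M` is a possible output of the round-robin algorithm: starting from empty
bundles, rounds are performed until no class assigns positive marginal value to
any remaining item, and `M` is obtained by matching each class `p` with its final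
bundle `Bu p` via a maximum-weight matching. -/
def IsRoundRobinOutput [Fintype B] [DecidableEq A] [DecidableEq B] {k : ℕ}
    (w : A → B → ℝ) (cls : Fin k → Finset A) (M : Finset (A × B)) : Prop :=
  ∃ Bu : Fin k → Finset B,
    Relation.ReflTransGen (RoundStep w cls) (fun _ => ∅) Bu ∧
    (∀ p, ∀ j ∈ remainingItems Bu, marginalVal w (cls p) (Bu p) j ≤ 0) ∧
    IsMatching M ∧
    (∀ p : Fin k, ∀ e ∈ M, e.1 ∈ cls p → e.2 ∈ Bu p) ∧
    (∀ p : Fin k, classUtil w M (cls p) = vval w (cls p) (Bu p))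

/-- An `(α,β)`-PDF-bounded distribution on `[0,1]`: it has a density bounded
between `a` and `b` on `[0,1]` and vanishing outside `[0,1]`. -/
def PDFBounded (D : Measure ℝ) (a b : ℝ) : Prop :=
  ∃ f : ℝ → ℝ,
    (∀ x ∈ Set.Icc (0 : ℝ) 1, a ≤ f x ∧ f x ≤ b) ∧
    (∀ x, x ∉ Set.Icc (0 : ℝ) 1 → f x = 0) ∧
    D = MeasureTheory.volume.withDensity fun x => ENNReal.ofReal (f x)

/-- The reversed exponential distribution `ReExp(λ)`, with density
`λ e^{-λ(1-x)}` on `(-∞, 1]`. -/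
noncomputable def reExp (lam : ℝ) : Measure ℝ :=
  MeasureTheory.volume.withDensity fun x =>
    ENNReal.ofReal (if x ≤ 1 then lam * Real.exp (-lam * (1 - x)) else 0)

/-- An acceptable alternating path of length `ℓ` for the threshold `w0`, of the
matching `Mopt`, inside the bipartite graph on right vertex set `S`: it visits
distinct matched left vertices `i 0, …, i (ℓ-1)` and ends in an unmatched right
vertex `j'`, and all its non-matching edges have weight at least `w0`. -/
def AcceptablePath (w : A → B → ℝ) (S : Finset B)
    (Mopt : Finset (A × B)) (w0 : ℝ) (ℓ : ℕ) : Prop :=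
  ∃ hℓ : 0 < ℓ, ∃ (i : Fin ℓ → A) (b : Fin ℓ → B) (j' : B),
    Function.Injective i ∧
    (∀ t, (i t, b t) ∈ Mopt) ∧
    j' ∈ S ∧ (∀ a : A, (a, j') ∉ Mopt) ∧
    (∀ t : Fin ℓ, ∀ ht : (t : ℕ) + 1 < ℓ, w0 ≤ w (i t) (b ⟨(t : ℕ) + 1, ht⟩)) ∧
    w0 ≤ w (i ⟨ℓ - 1, Nat.sub_lt hℓ Nat.one_pos⟩) j'

/-- An acceptable alternating cycle of length `ℓ` for the threshold `w0`, of the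
matching `Mopt`: it visits distinct matched left vertices `i 0, …, i (ℓ-1)` and
all its non-matching edges have weight at least `w0`. -/
def AcceptableCycle (w : A → B → ℝ)
    (Mopt : Finset (A × B)) (w0 : ℝ) (ℓ : ℕ) : Prop :=
  ∃ hℓ : 0 < ℓ, ∃ (i : Fin ℓ → A) (b : Fin ℓ → B),
    Function.Injective i ∧
    (∀ t, (i t, b t) ∈ Mopt) ∧
    ∀ t : Fin ℓ, w0 ≤ w (i t) (b ⟨((t : ℕ) + 1) % ℓ, Nat.mod_lt _ hℓ⟩)

end ClassEF

namespace ClassEF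

section Aux
variable {A B : Type*} [DecidableEq A] [DecidableEq B]

lemma le_vval {w : A → B → ℝ} {Np : Finset A} {S : Finset B} {M : Finset (A × B)}
    (h1 : IsMatching M) (h2 : M ⊆ Np ×ˢ S) : weightSum w M ≤ vval w Np S := by
  classical
  unfold vval
  refine Finset.le_sup' _ ?_
  simp only [Finset.mem_filter, Finset.mem_powerset]
  exact ⟨h2, h1⟩

lemma exists_max_matching (w : A → B → ℝ) (Np : Finset A) (S : Finset B) :
    ∃ M, IsMatching M ∧ M ⊆ Np ×ˢ S ∧ weightSum w M = vval w Np S := by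
  classical
  unfold vval
  obtain ⟨M, hmem, heq⟩ := Finset.exists_mem_eq_sup'
    (s := ((Np ×ˢ S).powerset.filter fun M => IsMatching M)) ⟨∅, by simp [IsMatching]⟩ (weightSum w)
  simp only [Finset.mem_filter, Finset.mem_powerset] at hmem
  exact ⟨M, hmem.2, hmem.1, heq.symm⟩

lemma vval_mono (w : A → B → ℝ) (Np : Finset A) {S T : Finset B} (h : S ⊆ T) :
    vval w Np S ≤ vval w Np T := by
  obtain ⟨M, h1, h2, h3⟩ := exists_max_matching w Np S
  rw [← h3]
  exact le_vval h1 (h2.trans (Finset.product_subset_product (le_refl _) h))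

end Aux

end ClassEF

namespace ClassEF

section Exchange
variable {A B : Type*} [DecidableEq A] [DecidableEq B]

open Classical in
lemma exchange_exists (w : A → B → ℝ) (Np : Finset A) (SA SX : Finset B)
    (hcard : SA.card < SX.card) :
    ∃ y ∈ SX, y ∉ SA ∧
      vval w Np SA + vval w Np SX ≤
        vval w Np (insert y SA) + vval w Np (SX.erase y) := by
  classical
  obtain ⟨MA, hMA, hMAsub, hMAw⟩ := exists_max_matching w Np SA
  obtain ⟨MX, hMX, hMXsub, hMXw⟩ := exists_max_matching w Np SX
  -- the "successor" relation along alternating paths: b --MX--> i --MA--> b'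
  set R : B → B → Prop := fun b b' => ∃ i, (i, b) ∈ MX ∧ (i, b') ∈ MA with hR
  have hRinj : ∀ {b b' c : B}, R b c → R b' c → b = b' := by
    rintro b b' c ⟨i, hib, hic⟩ ⟨i', hib', hic'⟩
    have : (i, c) = (i', c) := hMA.2 _ hic _ hic' rfl
    have hii : i = i' := congrArg Prod.fst this
    subst hii
    have : (i, b) = (i, b') := hMX.1 _ hib _ hib' rfl
    exact congrArg Prod.snd this
  have hRmemA : ∀ {b c : B}, R b c → c ∈ SA := by
    rintro b c ⟨i, -, hic⟩
    exact (Finset.mem_product.mp (hMAsub hic)).2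
  -- backward uniqueness of sources of alternating paths
  have huniq : ∀ y₁ y₂ b : B, y₁ ∉ SA → y₂ ∉ SA →
      Relation.ReflTransGen R y₁ b → Relation.ReflTransGen R y₂ b → y₁ = y₂ := by
    intro y₁ y₂ b hy₁ hy₂ h₁ h₂
    induction h₁ with
    | refl =>
      rcases h₂.cases_tail with h | ⟨c, hc, hcb⟩
      · exact h
      · exact absurd (hRmemA hcb) hy₁
    | tail h hcb ih =>
      rcases h₂.cases_tail with h' | ⟨c', hc', hcb'⟩
      · subst h'; exact absurd (hRmemA hcb) hy₂
      · exact ih (hRinj hcb' hcb ▸ hc')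
  by_cases hgood : ∃ y, y ∈ SX ∧ y ∉ SA ∧
      ∀ b, Relation.ReflTransGen R y b → b ∈ SA → b ∈ SX
  · obtain ⟨y, hySX, hySA, hgood⟩ := hgood
    refine ⟨y, hySX, hySA, ?_⟩
    -- the orbit of y
    set O : Finset B := (insert y SA).filter (fun b => Relation.ReflTransGen R y b) with hO
    have hOy : y ∈ O :=
      Finset.mem_filter.mpr ⟨Finset.mem_insert_self _ _, Relation.ReflTransGen.refl⟩
    have hOreach : ∀ {b}, b ∈ O → Relation.ReflTransGen R y b := by
      intro b hb; exact (Finset.mem_filter.mp hb).2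
    have hOmem : ∀ {b}, Relation.ReflTransGen R y b → b ∈ O := by
      intro b hb
      rcases hb.cases_tail with h | ⟨c, hc, hcb⟩
      · subst h; exact hOy
      · exact Finset.mem_filter.mpr ⟨Finset.mem_insert_of_mem (hRmemA hcb), hb⟩
    have hfwd : ∀ {b c}, b ∈ O → R b c → c ∈ O :=
      fun hb hbc => hOmem ((hOreach hb).tail hbc)
    have hbwd : ∀ {b c}, R b c → c ∈ O → b ∈ O := by
      intro b c hbc hc
      rcases (hOreach hc).cases_tail with h | ⟨d, hd, hdc⟩
      · subst h; exact absurd (hRmemA hbc) hySA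
      · exact (hRinj hbc hdc ▸ hd : Relation.ReflTransGen R y b) |> hOmem
    -- the swapped matchings
    set MA' : Finset (A × B) :=
      MA.filter (fun e => e.2 ∉ O) ∪ MX.filter (fun e => e.2 ∈ O) with hMA'
    set MX' : Finset (A × B) :=
      MX.filter (fun e => e.2 ∉ O) ∪ MA.filter (fun e => e.2 ∈ O) with hMX'
    have hdisj1 : Disjoint (MA.filter (fun e => e.2 ∉ O)) (MX.filter (fun e => e.2 ∈ O)) := by
      rw [Finset.disjoint_left]
      intro e he he'
      exact (Finset.mem_filter.mp he).2 (Finset.mem_filter.mp he').2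
    have hdisj2 : Disjoint (MX.filter (fun e => e.2 ∉ O)) (MA.filter (fun e => e.2 ∈ O)) := by
      rw [Finset.disjoint_left]
      intro e he he'
      exact (Finset.mem_filter.mp he).2 (Finset.mem_filter.mp he').2
    have hMA'm : IsMatching MA' := by
      constructor
      · intro e he e' he' h1
        rcases Finset.mem_union.mp he with he | he <;>
          rcases Finset.mem_union.mp he' with he' | he'
        · exact hMA.1 _ (Finset.mem_filter.mp he).1 _ (Finset.mem_filter.mp he').1 h1
        · obtain ⟨heM, heO⟩ := Finset.mem_filter.mp he
          obtain ⟨he'M, he'O⟩ := Finset.mem_filter.mp he'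
          exact absurd (hfwd he'O ⟨e.1, h1 ▸ he'M, heM⟩) heO
        · obtain ⟨heM, heO⟩ := Finset.mem_filter.mp he
          obtain ⟨he'M, he'O⟩ := Finset.mem_filter.mp he'
          exact absurd (hfwd heO ⟨e.1, heM, h1.symm ▸ he'M⟩) he'O
        · exact hMX.1 _ (Finset.mem_filter.mp he).1 _ (Finset.mem_filter.mp he').1 h1
      · intro e he e' he' h2
        rcases Finset.mem_union.mp he with he | he <;>
          rcases Finset.mem_union.mp he' with he' | he'
        · exact hMA.2 _ (Finset.mem_filter.mp he).1 _ (Finset.mem_filter.mp he').1 h2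
        · exact absurd (Finset.mem_filter.mp he').2 (by rw [← h2]; exact (Finset.mem_filter.mp he).2)
        · exact absurd (Finset.mem_filter.mp he).2 (by rw [h2]; exact (Finset.mem_filter.mp he').2)
        · exact hMX.2 _ (Finset.mem_filter.mp he).1 _ (Finset.mem_filter.mp he').1 h2
    have hMX'm : IsMatching MX' := by
      constructor
      · intro e he e' he' h1
        rcases Finset.mem_union.mp he with he | he <;>
          rcases Finset.mem_union.mp he' with he' | he'
        · exact hMX.1 _ (Finset.mem_filter.mp he).1 _ (Finset.mem_filter.mp he').1 h1
        · obtain ⟨heM, heO⟩ := Finset.mem_filter.mp he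
          obtain ⟨he'M, he'O⟩ := Finset.mem_filter.mp he'
          exact absurd (hbwd ⟨e.1, heM, h1 ▸ he'M⟩ he'O) heO
        · obtain ⟨heM, heO⟩ := Finset.mem_filter.mp he
          obtain ⟨he'M, he'O⟩ := Finset.mem_filter.mp he'
          exact absurd (hbwd ⟨e.1, h1.symm ▸ he'M, heM⟩ heO) he'O
        · exact hMA.1 _ (Finset.mem_filter.mp he).1 _ (Finset.mem_filter.mp he').1 h1
      · intro e he e' he' h2
        rcases Finset.mem_union.mp he with he | he <;>
          rcases Finset.mem_union.mp he' with he' | he'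
        · exact hMX.2 _ (Finset.mem_filter.mp he).1 _ (Finset.mem_filter.mp he').1 h2
        · exact absurd (Finset.mem_filter.mp he').2 (by rw [← h2]; exact (Finset.mem_filter.mp he).2)
        · exact absurd (Finset.mem_filter.mp he).2 (by rw [h2]; exact (Finset.mem_filter.mp he').2)
        · exact hMA.2 _ (Finset.mem_filter.mp he).1 _ (Finset.mem_filter.mp he').1 h2
    have hMA'sub : MA' ⊆ Np ×ˢ (insert y SA) := by
      intro e he
      rcases Finset.mem_union.mp he with he | he
      · obtain ⟨heM, -⟩ := Finset.mem_filter.mp he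
        have := Finset.mem_product.mp (hMAsub heM)
        exact Finset.mem_product.mpr ⟨this.1, Finset.mem_insert_of_mem this.2⟩
      · obtain ⟨heM, heO⟩ := Finset.mem_filter.mp he
        have := Finset.mem_product.mp (hMXsub heM)
        exact Finset.mem_product.mpr ⟨this.1, (Finset.mem_filter.mp heO).1⟩
    have hMX'sub : MX' ⊆ Np ×ˢ (SX.erase y) := by
      intro e he
      rcases Finset.mem_union.mp he with he | he
      · obtain ⟨heM, heO⟩ := Finset.mem_filter.mp he
        have := Finset.mem_product.mp (hMXsub heM)
        refine Finset.mem_product.mpr ⟨this.1, Finset.mem_erase.mpr ⟨?_, this.2⟩⟩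
        intro h; exact heO (h ▸ hOy)
      · obtain ⟨heM, heO⟩ := Finset.mem_filter.mp he
        have hprod := Finset.mem_product.mp (hMAsub heM)
        refine Finset.mem_product.mpr ⟨hprod.1, Finset.mem_erase.mpr ⟨?_, ?_⟩⟩
        · intro h; exact hySA (h ▸ hprod.2)
        · exact hgood _ (hOreach heO) hprod.2
    have hsum : weightSum w MA' + weightSum w MX' = weightSum w MA + weightSum w MX := by
      unfold weightSum
      rw [Finset.sum_union hdisj1, Finset.sum_union hdisj2]
      have h1 := Finset.sum_filter_add_sum_filter_not MA (fun e => e.2 ∉ O)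
        (fun e => w e.1 e.2)
      have h2 := Finset.sum_filter_add_sum_filter_not MX (fun e => e.2 ∉ O)
        (fun e => w e.1 e.2)
      simp only [not_not] at h1 h2
      linarith
    have b1 := le_vval (w := w) hMA'm hMA'sub
    have b2 := le_vval (w := w) hMX'm hMX'sub
    linarith [hMAw, hMXw]
  · -- counting contradiction
    exfalso
    push_neg at hgood
    have hbad : ∀ y : B, ∃ b, y ∈ SX \ SA →
        Relation.ReflTransGen R y b ∧ b ∈ SA ∧ b ∉ SX := by
      intro y
      by_cases hy : y ∈ SX \ SA
      · obtain ⟨hySX, hySA⟩ := Finset.mem_sdiff.mp hy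
        obtain ⟨b, h1, h2, h3⟩ := hgood y hySX hySA
        exact ⟨b, fun _ => ⟨h1, h2, h3⟩⟩
      · exact ⟨y, fun h => absurd h hy⟩
    choose F hF using hbad
    have hmaps : ∀ y ∈ SX \ SA, F y ∈ SA \ SX := fun y hy =>
      Finset.mem_sdiff.mpr ⟨(hF y hy).2.1, (hF y hy).2.2⟩
    have hinj : ∀ y₁ ∈ SX \ SA, ∀ y₂ ∈ SX \ SA, F y₁ = F y₂ → y₁ = y₂ := by
      intro y₁ h₁ y₂ h₂ heq
      exact huniq y₁ y₂ (F y₁) (Finset.mem_sdiff.mp h₁).2 (Finset.mem_sdiff.mp h₂).2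
        (hF y₁ h₁).1 (heq ▸ (hF y₂ h₂).1)
    have hle : (SX \ SA).card ≤ (SA \ SX).card :=
      Finset.card_le_card_of_injOn F hmaps hinj
    have e1 : (SX \ SA).card + (SX ∩ SA).card = SX.card := Finset.card_sdiff_add_card_inter SX SA
    have e2 : (SA \ SX).card + (SA ∩ SX).card = SA.card := Finset.card_sdiff_add_card_inter SA SX
    rw [Finset.inter_comm] at e2
    omega

end Exchange

end ClassEF

namespace ClassEF

section Greedy
variable {A B : Type*} [DecidableEq A] [DecidableEq B] [Fintype B]

/-- Greedy dominance invariant along the round-robin run. -/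
def Inv {k : ℕ} (w : A → B → ℝ) (cls : Fin k → Finset A) (Bu : Fin k → Finset B) : Prop :=
  ∀ p : Fin k, ∀ X ⊆ Bu p ∪ remainingItems Bu,
    (X.card ≤ (Bu p).card → vval w (cls p) X ≤ vval w (cls p) (Bu p)) ∧
    (X.card < (Bu p).card → vval w (cls p) X < vval w (cls p) (Bu p))

lemma inv_empty {k : ℕ} (w : A → B → ℝ) (cls : Fin k → Finset A) :
    Inv w cls (fun _ => (∅ : Finset B)) := by
  intro p X hX
  constructor
  · intro hcard
    have : X = ∅ := Finset.card_eq_zero.mp (Nat.le_zero.mp (by simpa using hcard))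
    simp [this]
  · intro hcard
    simp at hcard

lemma inv_classStep {k : ℕ} (w : A → B → ℝ) (cls : Fin k → Finset A) (p : Fin k)
    {Bu Bu' : Fin k → Finset B} (h : ClassStep w cls p Bu Bu') (hinv : Inv w cls Bu) :
    Inv w cls Bu' := by
  rcases h with ⟨j, hj, hpos, hmax, rfl⟩ | ⟨-, rfl⟩
  · have hrem : remainingItems (Function.update Bu p (insert j (Bu p))) ⊆ remainingItems Bu := by
      apply Finset.sdiff_subset_sdiff (le_refl _)
      intro x hx
      rw [Finset.mem_biUnion] at hx ⊢
      obtain ⟨q, -, hq⟩ := hx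
      refine ⟨q, Finset.mem_univ _, ?_⟩
      by_cases hqp : q = p
      · subst hqp; rw [Function.update_self]; exact Finset.mem_insert_of_mem hq
      · rw [Function.update_of_ne hqp]; exact hq
    have hjS : j ∉ Bu p := by
      have := Finset.mem_sdiff.mp hj
      intro hmem
      exact this.2 (Finset.mem_biUnion.mpr ⟨p, Finset.mem_univ _, hmem⟩)
    have hposS : vval w (cls p) (Bu p) < vval w (cls p) (insert j (Bu p)) := by
      have := hpos; unfold marginalVal at this; linarith
    intro q X hX
    by_cases hqp : p = q
    · subst hqp
      rw [Function.update_self] at hX ⊢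
      have hXsub : X ⊆ Bu p ∪ remainingItems Bu := by
        refine hX.trans ?_
        intro x hx
        rcases Finset.mem_union.mp hx with hx | hx
        · rcases Finset.mem_insert.mp hx with rfl | hx
          · exact Finset.mem_union_right _ hj
          · exact Finset.mem_union_left _ hx
        · exact Finset.mem_union_right _ (hrem hx)
      have hcardS : (insert j (Bu p)).card = (Bu p).card + 1 :=
        Finset.card_insert_of_notMem hjS
      constructor
      · intro hcard
        rw [hcardS] at hcard
        rcases Nat.lt_or_ge X.card ((Bu p).card + 1) with hlt | hge
        · have := (hinv p X hXsub).1 (Nat.lt_succ_iff.mp hlt)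
          linarith
        · have hXcard : (Bu p).card < X.card := by omega
          obtain ⟨y, hySX, hySA, hexch⟩ := exchange_exists w (cls p) (Bu p) X hXcard
          have hyrem : y ∈ remainingItems Bu := by
            rcases Finset.mem_union.mp (hXsub hySX) with hy | hy
            · exact absurd hy hySA
            · exact hy
          have hmarg := hmax y hyrem
          unfold marginalVal at hmarg
          have herase : (X.erase y).card ≤ (Bu p).card := by
            rw [Finset.card_erase_of_mem hySX]; omega
          have hXe : X.erase y ⊆ Bu p ∪ remainingItems Bu :=
            (Finset.erase_subset _ _).trans hXsub
          have := (hinv p (X.erase y) hXe).1 herase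
          linarith
      · intro hcard
        rw [hcardS] at hcard
        have := (hinv p X hXsub).1 (Nat.lt_succ_iff.mp hcard)
        linarith
    · rw [Function.update_of_ne (fun h => hqp h.symm)] at hX ⊢
      have hXsub : X ⊆ Bu q ∪ remainingItems Bu := by
        refine hX.trans ?_
        exact Finset.union_subset_union (le_refl _) hrem
      exact hinv q X hXsub
  · exact hinv

lemma inv_roundStep {k : ℕ} (w : A → B → ℝ) (cls : Fin k → Finset A)
    {Bu Bu' : Fin k → Finset B} (h : RoundStep w cls Bu Bu') (hinv : Inv w cls Bu) :
    Inv w cls Bu' := by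
  obtain ⟨f, h0, hlast, hstep⟩ := h
  have key : ∀ i : Fin (k + 1), Inv w cls (f i) := by
    intro i
    induction i using Fin.induction with
    | zero => rw [h0]; exact hinv
    | succ i ih => exact inv_classStep w cls i (hstep i) ih
  rw [← hlast]; exact key _

end Greedy

end ClassEF

namespace ClassEF

/-- in the matching produced by the round-robin algorithm, removing
any item allocated to a class strictly decreases the value of that class's
bundle. -/
theorem stmt9 {n m k : ℕ} (cls : Fin k → Finset (Fin n))
    (hpart : IsClassPartition cls)
    (u : Fin n → Fin m → ℝ) (hu : ∀ i j, u i j ∈ Set.Icc (0 : ℝ) 1)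
    (M : Finset (Fin n × Fin m)) (hM : IsRoundRobinOutput u cls M) :
    ∀ p : Fin k, ∀ j ∈ bundleOf M (cls p),
      vval u (cls p) ((bundleOf M (cls p)).erase j) < vval u (cls p) (bundleOf M (cls p)) := by
  obtain ⟨Bu, hchain, hstop, hmatch, hsub, hutil⟩ := hM
  have key : ∀ Bu' : Fin k → Finset (Fin m),
      Relation.ReflTransGen (RoundStep u cls) (fun _ => ∅) Bu' → Inv u cls Bu' := by
    intro Bu' h
    induction h with
    | refl => exact inv_empty u cls
    | tail _ hstep ih => exact inv_roundStep u cls hstep ih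
  have hinv : Inv u cls Bu := key Bu hchain
  intro p j hj
  -- the restricted matching of class p
  set Mp : Finset (Fin n × Fin m) := M.filter (fun e => e.1 ∈ cls p) with hMp
  have hMpm : IsMatching Mp := by
    constructor
    · intro e he e' he' h1
      exact hmatch.1 _ (Finset.mem_of_mem_filter _ he) _ (Finset.mem_of_mem_filter _ he') h1
    · intro e he e' he' h2
      exact hmatch.2 _ (Finset.mem_of_mem_filter _ he) _ (Finset.mem_of_mem_filter _ he') h2
  have hMpsub : Mp ⊆ (cls p) ×ˢ (bundleOf M (cls p)) := by
    intro e he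
    obtain ⟨heM, hecls⟩ := Finset.mem_filter.mp he
    exact Finset.mem_product.mpr ⟨hecls, Finset.mem_image.mpr ⟨e, he, rfl⟩⟩
  have hwMp : weightSum u Mp = classUtil u M (cls p) := rfl
  have hD1 : classUtil u M (cls p) ≤ vval u (cls p) (bundleOf M (cls p)) := by
    rw [← hwMp]; exact le_vval hMpm hMpsub
  have hDsub : bundleOf M (cls p) ⊆ Bu p := by
    intro x hx
    obtain ⟨e, he, rfl⟩ := Finset.mem_image.mp hx
    obtain ⟨heM, hecls⟩ := Finset.mem_filter.mp he
    exact hsub p e heM hecls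
  have hD2 : vval u (cls p) (bundleOf M (cls p)) ≤ vval u (cls p) (Bu p) :=
    vval_mono u (cls p) hDsub
  have hDeq : vval u (cls p) (bundleOf M (cls p)) = vval u (cls p) (Bu p) := by
    have := hutil p; linarith
  have hcard : ((bundleOf M (cls p)).erase j).card < (Bu p).card :=
    lt_of_lt_of_le (Finset.card_erase_lt_of_mem hj) (Finset.card_le_card hDsub)
  have hXsub : (bundleOf M (cls p)).erase j ⊆ Bu p ∪ remainingItems Bu :=
    ((Finset.erase_subset _ _).trans hDsub).trans Finset.subset_union_left
  have := (hinv p _ hXsub).2 hcard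
  linarith

end ClassEF
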